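/- Set p = d/2 + 1 and M_n = ⌈n^{1/(2p+d)}⌉, partition [0,1]^d into M_n^d cubes {A_{n,j}} of side length 1/M_n with centers {a_{n,j}}, and let g : ℝ^d → ℝ be a function supported in (−1/2,1/2)^d with ∫g²(x)dx > 0 whose Fourier transform satisfies |F̂_g(ω)| ≤ c₉₂/(‖ω‖^{d+1}·(log‖ω‖)²) for all ω with ‖ω‖ ≥ 2. For c_n = (c_{n,1},…,c_{n,M_n^d}) ∈ {−1,1}^{M_n^d} define m^{(c_n)}(x) = Σ_{j=1}^{M_n^d} c_{n,j}·(log n)^{−3}·M_n^{−p}·g(M_n·(x − a_{n,j})). If c_n satisfies |Σ_{j=1}^{M_n^d} c_{n,j}·e^{iω^T a_{n,j}}| ≤ (log n)·M_n^{d/2} for all ω ∈ ℝ^d, then the Fourier transform of m^{(c_n)} satisfies |F̂_{m^{(c_n)}}(ω)| ≤ c₁/(‖ω‖^{d+1}·(log‖ω‖)²) for all ω ∈ ℝ^d with ‖ω‖ ≥ 2, for a constant c₁ > 0 not depending on n or c_n. -/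

import Mathlib

/-!
With `M = M_n`, the substitution `y = M (x - a_v)` in each summand gives
`F̂_m(ω) = (log n)⁻³ M^{-p-d} (∑_v c_v e^{-i⟨ω, a_v⟩}) F̂_g(ω / M)`. The condition on the
exponential sum, taken at `-ω`, bounds the sum by `log n · M^{d/2}`, and `p + d - d/2 = d + 1`
leaves `|F̂_m(ω)| ≤ (log n)⁻² M^{-(d+1)} |F̂_g(ω / M)|`.

For `‖ω‖ ≥ 2M` the decay of `F̂_g` at `u = ‖ω‖ / M ≥ 2` suffices, because `M ≤ n` gives
`log ‖ω‖ ≤ log n + log u ≤ (2 / log 2) log n log u`. For `‖ω‖ < 2M` the trivial bound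
`|F̂_g| ≤ (2π)^{-d/2} ‖g‖₁` suffices, because then `log ‖ω‖ ≤ 2 log n`.

If `g` is not integrable then neither is `m`, since the rescaled translates of `g` have disjoint
supports; both transforms are then `0`.
-/

open MeasureTheory

noncomputable section

abbrev Evec (d : ℕ) := EuclideanSpace ℝ (Fin d)

/-- The Fourier transform `F̂(ω) = (2π)^{−d/2} ∫ e^{−i⟨ω,x⟩} m(x) dx`. -/
def fourierT (d : ℕ) (m : Evec d → ℝ) (ω : Evec d) : ℂ :=
  ((2 * Real.pi : ℝ) ^ (-(d : ℝ) / 2) : ℝ) *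
    ∫ x : Evec d, Complex.exp (-(Complex.I * ((inner ℝ ω x : ℝ) : ℂ))) * (m x : ℂ)

/-- The smoothness exponent `p = d/2 + 1`. -/
def pexp (d : ℕ) : ℝ := (d : ℝ) / 2 + 1

/-- `M_n = ⌈n^{1/(2p+d)}⌉`. -/
def MnD (d n : ℕ) : ℕ := ⌈(n : ℝ) ^ ((1 : ℝ) / (2 * pexp d + d))⌉₊

/-- The centers `a_{n,j}` of the cubes of the partition of `[0,1]^d` into `M_n^d` cubes of
side length `1/M_n`, indexed by `v : Fin d → Fin M_n`. -/
def cubeCenter (d n : ℕ) (v : Fin d → Fin (MnD d n)) : Evec d :=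
  WithLp.toLp 2 (fun i => 1 / (2 * (MnD d n : ℝ)) + (v i : ℝ) / (MnD d n : ℝ))

/-- The function `m^{(c)}(x) = Σ_j c_j (log n)^{−3} M_n^{−p} g(M_n (x − a_{n,j}))`. -/
def mcn (d n : ℕ) (g : Evec d → ℝ) (c : (Fin d → Fin (MnD d n)) → ℝ) (x : Evec d) : ℝ :=
  ∑ v : Fin d → Fin (MnD d n),
    c v * ((Real.log n) ^ 3)⁻¹ * ((MnD d n : ℝ) ^ (pexp d))⁻¹ *
      g ((MnD d n : ℝ) • (x - cubeCenter d n v))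

open Complex

section FourierTransform

variable {d : ℕ}

lemma norm_exp_neg_I_mul_ofReal (t : ℝ) : ‖cexp (-(I * t))‖ = 1 := by
  rw [← mul_neg, ← ofReal_neg, norm_exp_I_mul_ofReal]

lemma integrable_exp_mul_iff {f : Evec d → ℝ} (ω : Evec d) :
    Integrable (fun x => cexp (-(I * (inner ℝ ω x : ℝ))) * (f x : ℂ)) ↔ Integrable f := by
  refine ⟨fun h => ?_, fun h => ?_⟩
  · have hf := h.bdd_mul (c := 1) (Continuous.aestronglyMeasurable (by fun_prop))
      (ae_of_all _ fun x => (norm_exp_I_mul_ofReal (inner ℝ ω x)).le)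
    simpa [← mul_assoc, ← Complex.exp_add] using hf.re
  · exact h.ofReal.bdd_mul (Continuous.aestronglyMeasurable (by fun_prop))
      (ae_of_all _ fun x => (norm_exp_neg_I_mul_ofReal _).le)

lemma fourierT_of_not_integrable {f : Evec d → ℝ} (hf : ¬ Integrable f) (ω : Evec d) :
    fourierT d f ω = 0 := by
  rw [fourierT, integral_undef (mt (integrable_exp_mul_iff ω).1 hf), mul_zero]

lemma fourierT_const_mul (r : ℝ) (f : Evec d → ℝ) (ω : Evec d) :
    fourierT d (fun x => r * f x) ω = r * fourierT d f ω := by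
  simp only [fourierT, ofReal_mul, mul_left_comm _ (r : ℂ), integral_const_mul]

lemma fourierT_sum {ι : Type*} (s : Finset ι) (f : ι → Evec d → ℝ)
    (hf : ∀ i ∈ s, Integrable (f i)) (ω : Evec d) :
    fourierT d (fun x => ∑ i ∈ s, f i x) ω = ∑ i ∈ s, fourierT d (f i) ω := by
  simp only [fourierT, ofReal_sum, Finset.mul_sum]
  rw [integral_finsetSum _ fun i hi => (integrable_exp_mul_iff ω).2 (hf i hi), Finset.mul_sum]

lemma fourierT_comp_smul_sub {M : ℝ} (hM : 0 < M) (g : Evec d → ℝ) (a ω : Evec d) :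
    fourierT d (fun x => g (M • (x - a))) ω =
      ((M ^ d)⁻¹ : ℝ) * cexp (-(I * (inner ℝ ω a : ℝ))) * fourierT d g (M⁻¹ • ω) := by
  have hshift : ∀ x : Evec d, cexp (-(I * (inner ℝ ω (x + a) : ℝ))) =
      cexp (-(I * (inner ℝ ω a : ℝ))) * cexp (-(I * (inner ℝ (M⁻¹ • ω) (M • x) : ℝ))) := by
    intro x
    rw [inner_add_right, real_inner_smul_left, real_inner_smul_right, inv_mul_cancel_left₀ hM.ne',
      ← Complex.exp_add]
    push_cast
    ring_nf
  simp only [fourierT]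
  rw [← integral_add_right_eq_self _ a]
  simp only [add_sub_cancel_right, hshift, mul_assoc, integral_const_mul]
  rw [Measure.integral_comp_smul volume
      (fun y => cexp (-(I * (inner ℝ (M⁻¹ • ω) y : ℝ))) * (g y : ℂ)),
    finrank_euclideanSpace_fin, abs_of_pos (inv_pos.2 (pow_pos hM d)), Complex.real_smul]
  push_cast
  ring

lemma norm_fourierT_le (f : Evec d → ℝ) (ω : Evec d) :
    ‖fourierT d f ω‖ ≤ (2 * Real.pi) ^ (-(d : ℝ) / 2) * ∫ x, |f x| := by
  have hK : 0 ≤ (2 * Real.pi) ^ (-(d : ℝ) / 2) := by positivity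
  rw [fourierT, norm_mul, norm_real, Real.norm_of_nonneg hK]
  refine mul_le_mul_of_nonneg_left ((norm_integral_le_integral_norm _).trans_eq ?_) hK
  simp only [norm_mul, norm_exp_neg_I_mul_ofReal, norm_real, Real.norm_eq_abs, one_mul]

lemma fourierT_zero (ω : Evec d) : fourierT d 0 ω = 0 := by
  simp [fourierT]

end FourierTransform

section Perturbation

variable {d n : ℕ} {g : Evec d → ℝ}

def SupportedInCube (g : Evec d → ℝ) : Prop :=
  ∀ x : Evec d, g x ≠ 0 → ∀ i, x i ∈ Set.Ioo (-(1 / 2) : ℝ) (1 / 2)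

lemma one_le_MnD (hn : 1 ≤ n) : 1 ≤ MnD d n :=
  Nat.one_le_ceil_iff.2 (Real.rpow_pos_of_pos (by exact_mod_cast hn) _)

lemma MnD_le (hn : 1 ≤ n) : MnD d n ≤ n := by
  refine Nat.ceil_le.2 ((Real.rpow_le_rpow_of_exponent_le (by exact_mod_cast hn) ?_).trans_eq
    (Real.rpow_one _))
  rw [pexp, div_le_one (by positivity)]
  linarith [(d.cast_nonneg : (0 : ℝ) ≤ d)]

lemma mcn_eq_zero_of_log_eq_zero (hn : Real.log n = 0) (c : (Fin d → Fin (MnD d n)) → ℝ) :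
    mcn d n g c = 0 := by
  funext x
  simp [mcn, hn]

lemma abs_sub_lt_of_comp_smul_sub_ne_zero (hgsupp : SupportedInCube g) {M : ℝ} (hM : 0 < M)
    {x a : Evec d} (hx : g (M • (x - a)) ≠ 0) (i : Fin d) :
    |x i - a i| < 1 / (2 * M) := by
  have hi := hgsupp _ hx i
  simp only [PiLp.smul_apply, PiLp.sub_apply, smul_eq_mul, Set.mem_Ioo] at hi
  have h : |M * (x i - a i)| < 1 / 2 := abs_lt.2 hi
  rw [abs_mul, abs_of_pos hM] at h
  rw [lt_div_iff₀ (by positivity)]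
  linarith

lemma one_div_MnD_le_abs_cubeCenter_sub {v w : Fin d → Fin (MnD d n)} {i : Fin d}
    (hi : v i ≠ w i) : 1 / (MnD d n : ℝ) ≤ |cubeCenter d n v i - cubeCenter d n w i| := by
  have hvw : (1 : ℝ) ≤ |((v i : ℕ) : ℝ) - (w i : ℕ)| := by
    have : ((v i : ℕ) : ℤ) - (w i : ℕ) ≠ 0 := sub_ne_zero.2 (by exact_mod_cast Fin.val_ne_of_ne hi)
    exact_mod_cast Int.one_le_abs this
  have hM : (0 : ℝ) < MnD d n := by
    exact_mod_cast (Fin.pos (v i))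
  simp only [cubeCenter, PiLp.toLp_apply, add_sub_add_left_eq_sub, ← sub_div, abs_div,
    abs_of_pos hM]
  exact div_le_div_of_nonneg_right hvw hM.le

lemma mcn_eq_of_mem_cube (hgsupp : SupportedInCube g) (hM : 0 < MnD d n)
    (c : (Fin d → Fin (MnD d n)) → ℝ) (v : Fin d → Fin (MnD d n))
    {x : Evec d} (hx : ∀ i, |x i - cubeCenter d n v i| < 1 / (2 * (MnD d n : ℝ))) :
    mcn d n g c x = c v * ((Real.log n) ^ 3)⁻¹ * ((MnD d n : ℝ) ^ (pexp d))⁻¹ *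
      g ((MnD d n : ℝ) • (x - cubeCenter d n v)) := by
  refine Fintype.sum_eq_single v fun w hne => ?_
  suffices g ((MnD d n : ℝ) • (x - cubeCenter d n w)) = 0 by rw [this, mul_zero]
  by_contra hw
  obtain ⟨i, hi⟩ := Function.ne_iff.1 hne
  have hM' : (0 : ℝ) < MnD d n := by exact_mod_cast hM
  have hxw := abs_sub_lt_of_comp_smul_sub_ne_zero hgsupp hM' hw i
  have hdist := one_div_MnD_le_abs_cubeCenter_sub hi
  have htri := abs_sub_le (cubeCenter d n w i) (x i) (cubeCenter d n v i)
  rw [abs_sub_comm (cubeCenter d n w i) (x i)] at htri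
  have hhalf : 1 / (2 * (MnD d n : ℝ)) + 1 / (2 * MnD d n) = 1 / MnD d n := by
    field_simp; ring
  linarith [hx i]

lemma integrable_of_integrable_mcn (hgsupp : SupportedInCube g) (hM : 0 < MnD d n)
    {c : (Fin d → Fin (MnD d n)) → ℝ} {v : Fin d → Fin (MnD d n)}
    (hcoef : c v * ((Real.log n) ^ 3)⁻¹ * ((MnD d n : ℝ) ^ (pexp d))⁻¹ ≠ 0)
    (h : Integrable (mcn d n g c)) : Integrable g := by
  have hM' : (0 : ℝ) < MnD d n := by exact_mod_cast hM
  set M : ℝ := (MnD d n : ℝ)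
  set a := cubeCenter d n v
  set U : Set (Evec d) := {x | ∀ i, |x i - a i| < 1 / (2 * M)}
  have hU : MeasurableSet U := by
    simp only [U, Set.ofPred_forall]
    exact MeasurableSet.iInter fun i => measurableSet_lt (by fun_prop) measurable_const
  have hterm : (fun x => g (M • (x - a))) =
      U.indicator (fun x => (c v * ((Real.log n) ^ 3)⁻¹ * (M ^ (pexp d))⁻¹)⁻¹ * mcn d n g c x) := by
    funext x
    by_cases hx : x ∈ U
    · rw [Set.indicator_of_mem hx, mcn_eq_of_mem_cube hgsupp hM c v hx, inv_mul_cancel_left₀ hcoef]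
    · rw [Set.indicator_of_notMem hx]
      by_contra hgx
      exact hx (abs_sub_lt_of_comp_smul_sub_ne_zero hgsupp hM' hgx)
  have hg : Integrable (fun x => g (M • (x - a))) := hterm ▸ (h.const_mul _).indicator hU
  exact (integrable_comp_smul_iff volume g hM'.ne').1 (by simpa using hg.comp_add_right a)

lemma rpow_pexp_mul_pow {M : ℝ} (hM : 0 < M) (d : ℕ) :
    M ^ pexp d * M ^ d = M ^ ((d : ℝ) / 2) * M ^ (d + 1) := by
  rw [← Real.rpow_natCast, ← Real.rpow_natCast, ← Real.rpow_add hM, ← Real.rpow_add hM, pexp]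
  push_cast
  ring_nf

lemma fourierT_mcn (hg : Integrable g) (hM : 0 < MnD d n) (c : (Fin d → Fin (MnD d n)) → ℝ)
    (ω : Evec d) :
    fourierT d (mcn d n g c) ω =
      (((Real.log n) ^ 3)⁻¹ * ((MnD d n : ℝ) ^ (pexp d))⁻¹ * ((MnD d n : ℝ) ^ d)⁻¹ : ℝ) *
        (∑ v, (c v : ℂ) * cexp (-(I * (inner ℝ ω (cubeCenter d n v) : ℝ)))) *
        fourierT d g ((MnD d n : ℝ)⁻¹ • ω) := by
  have hM' : (0 : ℝ) < MnD d n := by exact_mod_cast hM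
  unfold mcn
  rw [fourierT_sum _ _ fun v _ => ((hg.comp_smul hM'.ne').comp_sub_right _).const_mul _,
    Finset.mul_sum, Finset.sum_mul]
  refine Finset.sum_congr rfl fun v _ => ?_
  rw [fourierT_const_mul, fourierT_comp_smul_sub hM']
  push_cast
  ring

lemma norm_fourierT_mcn_le (hn : 2 ≤ n) (hgsupp : SupportedInCube g)
    {c : (Fin d → Fin (MnD d n)) → ℝ} (hc : ∀ v, c v = 1 ∨ c v = -1)
    (hS : ∀ ω : Evec d,
      ‖∑ v : Fin d → Fin (MnD d n),
          (c v : ℂ) * cexp (I * (inner ℝ ω (cubeCenter d n v) : ℝ))‖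
        ≤ Real.log n * (MnD d n : ℝ) ^ ((d : ℝ) / 2))
    (ω : Evec d) :
    ‖fourierT d (mcn d n g c) ω‖ ≤
      ((Real.log n) ^ 2 * (MnD d n : ℝ) ^ (d + 1))⁻¹ * ‖fourierT d g ((MnD d n : ℝ)⁻¹ • ω)‖ := by
  have hMN : 0 < MnD d n := one_le_MnD (by omega)
  have hM : (0 : ℝ) < MnD d n := by exact_mod_cast hMN
  have hlog : 0 < Real.log n := Real.log_pos (by exact_mod_cast hn)
  by_cases hg : Integrable g
  · have hS' := hS (-ω)
    simp only [inner_neg_left, ofReal_neg, mul_neg] at hS'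
    rw [fourierT_mcn hg hMN, norm_mul, norm_mul, norm_real, Real.norm_of_nonneg (by positivity)]
    calc _ ≤ ((Real.log n) ^ 3)⁻¹ * ((MnD d n : ℝ) ^ (pexp d))⁻¹ * ((MnD d n : ℝ) ^ d)⁻¹ *
            (Real.log n * (MnD d n : ℝ) ^ ((d : ℝ) / 2)) *
              ‖fourierT d g ((MnD d n : ℝ)⁻¹ • ω)‖ := by
          gcongr
      _ = _ := by
          rw [mul_assoc _ (_ ^ pexp d)⁻¹, ← mul_inv, rpow_pexp_mul_pow hM]
          field_simp
  · obtain ⟨v⟩ : Nonempty (Fin d → Fin (MnD d n)) := ⟨fun _ => ⟨0, hMN⟩⟩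
    have hcoef : c v * ((Real.log n) ^ 3)⁻¹ * ((MnD d n : ℝ) ^ (pexp d))⁻¹ ≠ 0 := by
      have : c v ≠ 0 := by rcases hc v with h | h <;> norm_num [h]
      positivity
    rw [fourierT_of_not_integrable (mt (integrable_of_integrable_mcn hgsupp hMN hcoef) hg),
      norm_zero]
    positivity

end Perturbation

section Decay

variable {d : ℕ}

def decayWeight (d : ℕ) (t : ℝ) : ℝ := t ^ (d + 1) * Real.log t ^ 2

lemma decayWeight_pos {t : ℝ} (ht : 2 ≤ t) : 0 < decayWeight d t := by
  have : 0 < Real.log t := Real.log_pos (by linarith)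
  unfold decayWeight
  positivity

lemma log_add_log_le {a b : ℝ} (ha : 2 ≤ a) (hb : 2 ≤ b) :
    Real.log a + Real.log b ≤ 2 / Real.log 2 * (Real.log a * Real.log b) := by
  have h2 : 0 < Real.log 2 := Real.log_pos one_lt_two
  have ha' : Real.log 2 ≤ Real.log a := Real.log_le_log two_pos ha
  have hb' : Real.log 2 ≤ Real.log b := Real.log_le_log two_pos hb
  rw [div_mul_eq_mul_div, le_div_iff₀ h2]
  nlinarith

lemma decayWeight_mul_le {N M u : ℝ} (hN : 2 ≤ N) (hM : 1 ≤ M) (hMN : M ≤ N) (hu : 2 ≤ u) :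
    decayWeight d (M * u) ≤
      (2 / Real.log 2) ^ 2 * ((Real.log N) ^ 2 * M ^ (d + 1)) * decayWeight d u := by
  have hlog : Real.log (M * u) ≤ 2 / Real.log 2 * (Real.log N * Real.log u) := by
    rw [Real.log_mul (by positivity) (by positivity)]
    exact (add_le_add_left (Real.log_le_log (by positivity) hMN) _).trans (log_add_log_le hN hu)
  have hlog0 : 0 ≤ Real.log (M * u) := Real.log_nonneg (by nlinarith)
  have hMu : 0 ≤ M * u := by positivity
  unfold decayWeight
  calc (M * u) ^ (d + 1) * Real.log (M * u) ^ 2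
      ≤ (M * u) ^ (d + 1) * (2 / Real.log 2 * (Real.log N * Real.log u)) ^ 2 := by gcongr
    _ = _ := by ring

lemma decayWeight_le {N M t : ℝ} (hN : 2 ≤ N) (hMN : M ≤ N) (ht : 2 ≤ t) (htM : t ≤ 2 * M) :
    decayWeight d t ≤ 4 * 2 ^ (d + 1) * ((Real.log N) ^ 2 * M ^ (d + 1)) := by
  have hlog : Real.log t ≤ 2 * Real.log N := by
    calc Real.log t ≤ Real.log (N * N) := Real.log_le_log (by linarith) (by nlinarith)
      _ = 2 * Real.log N := by rw [Real.log_mul (by positivity) (by positivity)]; ring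
  have hlog0 : 0 ≤ Real.log t := Real.log_nonneg (by linarith)
  have ht0 : 0 ≤ t := by linarith
  have hM0 : 0 ≤ M := by linarith
  unfold decayWeight
  calc t ^ (d + 1) * Real.log t ^ 2 ≤ (2 * M) ^ (d + 1) * (2 * Real.log N) ^ 2 := by gcongr
    _ = _ := by ring

lemma inv_mul_le_div_decayWeight {c₀ C N M t x : ℝ} (hc₀ : 0 ≤ c₀) (hN : 2 ≤ N) (hM : 1 ≤ M)
    (hMN : M ≤ N) (ht : 2 ≤ t) (hx0 : 0 ≤ x) (hxC : x ≤ C)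
    (hx : 2 ≤ M⁻¹ * t → x ≤ c₀ / decayWeight d (M⁻¹ * t)) :
    ((Real.log N) ^ 2 * M ^ (d + 1))⁻¹ * x ≤
      (c₀ * (2 / Real.log 2) ^ 2 + 4 * 2 ^ (d + 1) * C) / decayWeight d t := by
  have hlogN : 0 < Real.log N := Real.log_pos (by linarith)
  set K := (Real.log N) ^ 2 * M ^ (d + 1)
  have hK : 0 < K := by positivity
  have hC : 0 ≤ C := hx0.trans hxC
  rw [inv_mul_le_iff₀ hK, mul_div_assoc', le_div_iff₀ (decayWeight_pos ht)]
  rcases le_or_gt (2 * M) t with hfar | hnear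
  · have hu : 2 ≤ M⁻¹ * t := by rw [le_inv_mul_iff₀ (by positivity)]; linarith
    have hxu := (le_div_iff₀ (decayWeight_pos hu)).1 (hx hu)
    have hW := decayWeight_mul_le (d := d) hN hM hMN hu
    rw [mul_inv_cancel_left₀ (by positivity)] at hW
    calc x * decayWeight d t ≤ x * ((2 / Real.log 2) ^ 2 * K * decayWeight d (M⁻¹ * t)) := by
          gcongr
      _ = (2 / Real.log 2) ^ 2 * K * (x * decayWeight d (M⁻¹ * t)) := by ring
      _ ≤ (2 / Real.log 2) ^ 2 * K * c₀ := by gcongr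
      _ ≤ K * (c₀ * (2 / Real.log 2) ^ 2 + 4 * 2 ^ (d + 1) * C) := by
          nlinarith [mul_nonneg hK.le (by positivity : 0 ≤ 4 * 2 ^ (d + 1) * C)]
  · calc x * decayWeight d t ≤ C * (4 * 2 ^ (d + 1) * K) :=
          mul_le_mul hxC (decayWeight_le hN hMN ht hnear.le) (decayWeight_pos ht).le hC
      _ ≤ K * (c₀ * (2 / Real.log 2) ^ 2 + 4 * 2 ^ (d + 1) * C) := by
          nlinarith [mul_nonneg hK.le (by positivity : 0 ≤ c₀ * (2 / Real.log 2) ^ 2)]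

end Decay

theorem statement18_general (d : ℕ) (c92 : ℝ) (hc92 : 0 < c92)
    (g : Evec d → ℝ)
    (hgsupp : ∀ x : Evec d, g x ≠ 0 → ∀ i, x i ∈ Set.Ioo (-(1 / 2) : ℝ) (1 / 2))
    (hgF : ∀ ω : Evec d, 2 ≤ ‖ω‖ →
      ‖fourierT d g ω‖ ≤ c92 / (‖ω‖ ^ (d + 1) * (Real.log ‖ω‖) ^ 2)) :
    ∃ c1 : ℝ, 0 < c1 ∧
      ∀ (n : ℕ) (c : (Fin d → Fin (MnD d n)) → ℝ),
        (∀ v, c v = 1 ∨ c v = -1) →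
        (∀ ω : Evec d,
          ‖∑ v : Fin d → Fin (MnD d n),
              (c v : ℂ) * Complex.exp (Complex.I * ((inner ℝ ω (cubeCenter d n v) : ℝ) : ℂ))‖
            ≤ Real.log n * (MnD d n : ℝ) ^ ((d : ℝ) / 2)) →
        ∀ ω : Evec d, 2 ≤ ‖ω‖ →
          ‖fourierT d (mcn d n g c) ω‖
            ≤ c1 / (‖ω‖ ^ (d + 1) * (Real.log ‖ω‖) ^ 2) := by
  set C := (2 * Real.pi) ^ (-(d : ℝ) / 2) * ∫ x, |g x|
  have hC : 0 ≤ C := by positivity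
  refine ⟨c92 * (2 / Real.log 2) ^ 2 + 4 * 2 ^ (d + 1) * C, by positivity, ?_⟩
  intro n c hc hS ω hω
  obtain hn | hn := lt_or_ge n 2
  · have hlog : Real.log n = 0 := by interval_cases n <;> simp
    rw [mcn_eq_zero_of_log_eq_zero hlog, fourierT_zero, norm_zero]
    exact div_nonneg (by positivity) (decayWeight_pos hω).le
  have hM : (1 : ℝ) ≤ MnD d n := by exact_mod_cast one_le_MnD (by omega)
  have hMN : (MnD d n : ℝ) ≤ n := by exact_mod_cast MnD_le (by omega)
  have hnorm : ‖(MnD d n : ℝ)⁻¹ • ω‖ = (MnD d n : ℝ)⁻¹ * ‖ω‖ :=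
    norm_smul_of_nonneg (by positivity) ω
  refine (norm_fourierT_mcn_le hn hgsupp hc hS ω).trans (inv_mul_le_div_decayWeight hc92.le
    (by exact_mod_cast hn) hM hMN hω (norm_nonneg _) (norm_fourierT_le g _) fun hu => ?_)
  have h := hgF _ (hnorm ▸ hu)
  rwa [hnorm] at h

/-- Fourier decay of the perturbation functions `m^{(c_n)}` in the
minimax lower bound, uniformly over `n` and over admissible sign vectors `c_n`. -/
theorem statement18 (d : ℕ) (hd : 0 < d) (c92 : ℝ) (hc92 : 0 < c92)
    (g : Evec d → ℝ)
    (hgsupp : ∀ x : Evec d, g x ≠ 0 → ∀ i, x i ∈ Set.Ioo (-(1 / 2) : ℝ) (1 / 2))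
    (hg2 : 0 < ∫ x : Evec d, (g x) ^ 2)
    (hgF : ∀ ω : Evec d, 2 ≤ ‖ω‖ →
      ‖fourierT d g ω‖ ≤ c92 / (‖ω‖ ^ (d + 1) * (Real.log ‖ω‖) ^ 2)) :
    ∃ c1 : ℝ, 0 < c1 ∧
      ∀ (n : ℕ) (c : (Fin d → Fin (MnD d n)) → ℝ),
        (∀ v, c v = 1 ∨ c v = -1) →
        (∀ ω : Evec d,
          ‖∑ v : Fin d → Fin (MnD d n),
              (c v : ℂ) * Complex.exp (Complex.I * ((inner ℝ ω (cubeCenter d n v) : ℝ) : ℂ))‖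
            ≤ Real.log n * (MnD d n : ℝ) ^ ((d : ℝ) / 2)) →
        ∀ ω : Evec d, 2 ≤ ‖ω‖ →
          ‖fourierT d (mcn d n g c) ω‖
            ≤ c1 / (‖ω‖ ^ (d + 1) * (Real.log ‖ω‖) ^ 2) :=
  statement18_general d c92 hc92 g hgsupp hgF
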